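/- arXiv:2304.08009 — 3 statements merged into one kernel-verified Lean document; each statement's English description precedes it below -/
import Mathlib

section
/- Let R_{2,i} denote the second antiderivative of the Haar wavelet ψ_i (with i = 2^j + k + 1, i ≥ 2), i.e., R_{2,i}(x) = ∫₀^x ∫₀^s ψ_i(r) dr ds, given explicitly by R_{2,i}(x) = (1/2)[(x−ζ₁)₊² − 2(x−ζ₂)₊² + (x−ζ₃)₊²] where y₊ = max(y,0) and ζ₁ = k/2^j, ζ₂ = (k+1/2)/2^j, ζ₃ = (k+1)/2^j. Then |R_{2,i}(x)| ≤ (8/3)·(1/2^{j+1})² for all x ∈ [0,1]. -/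
/-!
Writing `ramp c x = max (x - c) 0` and `h = 2⁻¹ ^ (j + 1)`, the wavelet is the second difference
`𝟙[ζ₁, ∞) - 2 𝟙[ζ₂, ∞) + 𝟙[ζ₃, ∞)` of unit steps with spacing `h`. Steps and ramps are right
derivatives of ramps and of `ramp² / 2`, and all of them vanish at `0` because the `ζᵢ` are
nonnegative, so the one-sided fundamental theorem of calculus integrates `ψ` twice to
`haarR2`. The latter is the same second difference of `ramp² / 2`, which increases from `0` to
`h²` and then stays constant, so even `|haarR2| ≤ h²` holds.
-/

open Set MeasureTheory intervalIntegral

/-- The Haar wavelet ψ_i on [0,1), indexed by i = 2^j + k + 1 with 0 ≤ k < 2^j. -/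
noncomputable def haarW (j k : ℕ) (x : ℝ) : ℝ :=
  if (k : ℝ) / 2 ^ j ≤ x ∧ x < ((k : ℝ) + 1 / 2) / 2 ^ j then 1
  else if ((k : ℝ) + 1 / 2) / 2 ^ j ≤ x ∧ x < ((k : ℝ) + 1) / 2 ^ j then -1
  else 0

/-- Explicit formula for the second repeated antiderivative of ψ_i. -/
noncomputable def haarR2 (j k : ℕ) (x : ℝ) : ℝ :=
  (1 / 2) * ((max (x - (k : ℝ) / 2 ^ j) 0) ^ 2
    - 2 * (max (x - ((k : ℝ) + 1 / 2) / 2 ^ j) 0) ^ 2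
    + (max (x - ((k : ℝ) + 1) / 2 ^ j) 0) ^ 2)

theorem hasDerivWithinAt_comp_ramp {g g' : ℝ → ℝ} (hg : ∀ y, HasDerivAt g (g' y) y)
    (hg0 : g 0 = 0) (c t : ℝ) :
    HasDerivWithinAt (fun s => g (max (s - c) 0)) (if c ≤ t then g' (t - c) else 0)
      (Ioi t) t := by
  split_ifs with hct
  · refine ((hg (t - c)).comp_sub_const t c).hasDerivWithinAt.congr (fun s hs => ?_) ?_
    · rw [max_eq_left (by linarith [mem_Ioi.mp hs])]
    · rw [max_eq_left (by linarith)]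
  · have hzero : (fun s => g (max (s - c) 0)) =ᶠ[nhds t] fun _ => 0 := by
      filter_upwards [Iio_mem_nhds (not_le.mp hct)] with s hs
      rw [max_eq_right (by linarith [mem_Iio.mp hs]), hg0]
    exact ((hasDerivAt_const t 0).congr_of_eventuallyEq hzero).hasDerivWithinAt

theorem hasDerivWithinAt_ramp (c t : ℝ) :
    HasDerivWithinAt (fun s => max (s - c) 0) (if c ≤ t then 1 else 0) (Ioi t) t :=
  hasDerivWithinAt_comp_ramp (fun y => hasDerivAt_id y) rfl c t

theorem hasDerivWithinAt_sq_ramp_div_two (c t : ℝ) :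
    HasDerivWithinAt (fun s => max (s - c) 0 ^ 2 / 2) (max (t - c) 0) (Ioi t) t := by
  have hsq : ∀ y : ℝ, HasDerivAt (fun y => y ^ 2 / 2) y y := fun y => by
    simpa using ((hasDerivAt_pow 2 y).div_const 2)
  convert hasDerivWithinAt_comp_ramp hsq (by norm_num) c t using 1
  split_ifs with hct
  · exact max_eq_left (by linarith)
  · exact max_eq_right (by linarith)

theorem max_zero_sub_eq_zero {c : ℝ} (hc : 0 ≤ c) : max (0 - c) 0 = 0 :=
  max_eq_right (by linarith)

theorem ite_Ico_eq_steps {a b c t : ℝ} (hab : a ≤ b) (hbc : b ≤ c) :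
    (if a ≤ t ∧ t < b then 1 else if b ≤ t ∧ t < c then -1 else 0 : ℝ) =
      (if a ≤ t then 1 else 0) - 2 * (if b ≤ t then 1 else 0) + (if c ≤ t then 1 else 0) := by
  split_ifs <;> grind

theorem abs_half_sq_ramp_second_diff_le (c h x : ℝ) (hh : 0 ≤ h) :
    |1 / 2 * (max (x - c) 0 ^ 2 - 2 * max (x - (c + h)) 0 ^ 2 + max (x - (c + 2 * h)) 0 ^ 2)|
      ≤ h ^ 2 := by
  rw [abs_le]
  rcases le_total x c with h1 | h1
  · rw [max_eq_right (by linarith), max_eq_right (by linarith), max_eq_right (by linarith)]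
    constructor <;> nlinarith
  rcases le_total x (c + h) with h2 | h2
  · rw [max_eq_left (by linarith), max_eq_right (by linarith), max_eq_right (by linarith)]
    constructor <;> nlinarith
  rcases le_total x (c + 2 * h) with h3 | h3
  · rw [max_eq_left (by linarith), max_eq_left (by linarith), max_eq_right (by linarith)]
    constructor <;> nlinarith
  · rw [max_eq_left (by linarith), max_eq_left (by linarith), max_eq_left (by linarith)]
    constructor <;> nlinarith

noncomputable def haarR1 (j k : ℕ) (s : ℝ) : ℝ :=
  max (s - (k : ℝ) / 2 ^ j) 0 - 2 * max (s - ((k : ℝ) + 1 / 2) / 2 ^ j) 0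
    + max (s - ((k : ℝ) + 1) / 2 ^ j) 0

theorem haarW_eq_steps (j k : ℕ) (t : ℝ) :
    haarW j k t = (if (k : ℝ) / 2 ^ j ≤ t then 1 else 0)
      - 2 * (if ((k : ℝ) + 1 / 2) / 2 ^ j ≤ t then 1 else 0)
      + (if ((k : ℝ) + 1) / 2 ^ j ≤ t then 1 else 0) :=
  ite_Ico_eq_steps (by gcongr; linarith) (by gcongr; linarith)

theorem intervalIntegrable_haarW (j k : ℕ) (a b : ℝ) :
    IntervalIntegrable (haarW j k) volume a b := by
  have step : ∀ c : ℝ, IntervalIntegrable (fun t : ℝ => if c ≤ t then (1 : ℝ) else 0) volume a b :=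
    fun c => Monotone.intervalIntegrable fun x y hxy => by
      split_ifs <;> linarith
  rw [funext (haarW_eq_steps j k)]
  exact ((step _).sub ((step _).const_mul 2)).add (step _)

theorem continuous_haarR1 (j k : ℕ) : Continuous (haarR1 j k) := by
  unfold haarR1
  fun_prop

theorem continuous_haarR2 (j k : ℕ) : Continuous (haarR2 j k) := by
  unfold haarR2
  fun_prop

theorem haarR1_zero (j k : ℕ) : haarR1 j k 0 = 0 := by
  rw [haarR1, max_zero_sub_eq_zero (by positivity), max_zero_sub_eq_zero (by positivity),
    max_zero_sub_eq_zero (by positivity)]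
  ring

theorem haarR2_zero (j k : ℕ) : haarR2 j k 0 = 0 := by
  rw [haarR2, max_zero_sub_eq_zero (by positivity), max_zero_sub_eq_zero (by positivity),
    max_zero_sub_eq_zero (by positivity)]
  ring

theorem haarR1_hasDerivWithinAt (j k : ℕ) (t : ℝ) :
    HasDerivWithinAt (haarR1 j k) (haarW j k t) (Ioi t) t := by
  rw [haarW_eq_steps]
  exact ((hasDerivWithinAt_ramp _ t).sub ((hasDerivWithinAt_ramp _ t).const_mul 2)).add
    (hasDerivWithinAt_ramp _ t)

theorem haarR2_hasDerivWithinAt (j k : ℕ) (t : ℝ) :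
    HasDerivWithinAt (haarR2 j k) (haarR1 j k t) (Ioi t) t := by
  have second_diff : haarR2 j k = fun s => max (s - (k : ℝ) / 2 ^ j) 0 ^ 2 / 2
      - 2 * (max (s - ((k : ℝ) + 1 / 2) / 2 ^ j) 0 ^ 2 / 2)
      + max (s - ((k : ℝ) + 1) / 2 ^ j) 0 ^ 2 / 2 := by
    funext s
    rw [haarR2]
    ring
  rw [second_diff]
  exact ((hasDerivWithinAt_sq_ramp_div_two _ t).sub
    ((hasDerivWithinAt_sq_ramp_div_two _ t).const_mul 2)).add
    (hasDerivWithinAt_sq_ramp_div_two _ t)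

theorem integral_haarW (j k : ℕ) {x : ℝ} (hx : 0 ≤ x) :
    ∫ r in (0 : ℝ)..x, haarW j k r = haarR1 j k x := by
  rw [integral_eq_sub_of_hasDeriv_right_of_le hx (continuous_haarR1 j k).continuousOn
    (fun t _ => haarR1_hasDerivWithinAt j k t) (intervalIntegrable_haarW j k 0 x),
    haarR1_zero, sub_zero]

theorem integral_haarR1 (j k : ℕ) {x : ℝ} (hx : 0 ≤ x) :
    ∫ s in (0 : ℝ)..x, haarR1 j k s = haarR2 j k x := by
  rw [integral_eq_sub_of_hasDeriv_right_of_le hx (continuous_haarR2 j k).continuousOn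
    (fun t _ => haarR2_hasDerivWithinAt j k t) ((continuous_haarR1 j k).intervalIntegrable 0 x),
    haarR2_zero, sub_zero]

theorem integral_integral_haarW (j k : ℕ) {x : ℝ} (hx : 0 ≤ x) :
    ∫ s in (0 : ℝ)..x, ∫ r in (0 : ℝ)..s, haarW j k r = haarR2 j k x := by
  rw [integral_congr fun s hs => integral_haarW j k (uIcc_of_le hx ▸ hs).1]
  exact integral_haarR1 j k hx

theorem abs_haarR2_le (j k : ℕ) (x : ℝ) : |haarR2 j k x| ≤ (1 / 2 ^ (j + 1)) ^ 2 := by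
  have mid : (k : ℝ) / 2 ^ j + 1 / 2 ^ (j + 1) = ((k : ℝ) + 1 / 2) / 2 ^ j := by
    rw [pow_succ]
    ring
  have right : (k : ℝ) / 2 ^ j + 2 * (1 / 2 ^ (j + 1)) = ((k : ℝ) + 1) / 2 ^ j := by
    rw [pow_succ]
    ring
  have h := abs_half_sq_ramp_second_diff_le ((k : ℝ) / 2 ^ j) (1 / 2 ^ (j + 1)) x (by positivity)
  rwa [mid, right] at h

theorem haar_second_antiderivative_bound_general (j k : ℕ) :
    (∀ x ∈ Set.Icc (0:ℝ) 1,
        (∫ s in (0:ℝ)..x, ∫ r in (0:ℝ)..s, haarW j k r) = haarR2 j k x) ∧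
      ∀ x ∈ Set.Icc (0:ℝ) 1, |haarR2 j k x| ≤ (8 / 3) * (1 / 2 ^ (j + 1)) ^ 2 := by
  refine ⟨fun x hx => integral_integral_haarW j k hx.1, fun x _ => ?_⟩
  calc |haarR2 j k x| ≤ (1 / 2 ^ (j + 1)) ^ 2 := abs_haarR2_le j k x
    _ ≤ 8 / 3 * (1 / 2 ^ (j + 1)) ^ 2 := le_mul_of_one_le_left (by positivity) (by norm_num)

theorem haar_second_antiderivative_bound (j k : ℕ) (hk : k < 2 ^ j) :
    (∀ x ∈ Set.Icc (0:ℝ) 1,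
        (∫ s in (0:ℝ)..x, ∫ r in (0:ℝ)..s, haarW j k r) = haarR2 j k x) ∧
      ∀ x ∈ Set.Icc (0:ℝ) 1, |haarR2 j k x| ≤ (8 / 3) * (1 / 2 ^ (j + 1)) ^ 2 :=
  haar_second_antiderivative_bound_general j k
end

section
/- Let z : [0,1]×[0,1] → ℝ be C² with |∂²z/∂x∂y| ≤ M on (0,1)². For i₁ = 2^{j₁}+k₁+1 ≥ 2 and i₂ = 2^{j₂}+k₂+1 ≥ 2, define D_{i₁,i₂} = ∫₀¹∫₀¹ z(x,y) ψ_{i₁}(x) ψ_{i₂}(y) dx dy with ψ the Haar wavelets. Then |D_{i₁,i₂}| ≤ M / (2^{j₁+1} · 2^{j₂+1}). -/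
open MeasureTheory Set intervalIntegral
open scoped Interval

theorem integral_indicator_Ico_of_le {E : Type*} [NormedAddCommGroup E] [NormedSpace ℝ E]
    {f : ℝ → E} {s t u v : ℝ} (hsu : s ≤ u) (huv : u ≤ v) (hvt : v ≤ t) :
    ∫ x in s..t, (Ico u v).indicator f x = ∫ x in u..v, f x := by
  rw [integral_of_le (hsu.trans (huv.trans hvt)), integral_of_le huv,
    integral_congr_ae (ae_restrict_of_ae (indicator_ae_eq_of_ae_eq_set Ico_ae_eq_Ioc)),
    setIntegral_indicator measurableSet_Ioc, inter_eq_right.2 (Ioc_subset_Ioc hsu hvt)]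

theorem integral_indicator_Ico_sub_indicator_Ico {f : ℝ → ℝ} (hf : IntervalIntegrable f volume 0 1)
    {a h : ℝ} (ha : 0 ≤ a) (hh : 0 ≤ h) (h1 : a + h + h ≤ 1) :
    ∫ x in (0:ℝ)..1, ((Ico a (a + h)).indicator f x - (Ico (a + h) (a + h + h)).indicator f x)
      = ∫ x in a..a + h, (f x - f (x + h)) := by
  have hf' : ∀ u v, 0 ≤ u → u ≤ v → v ≤ 1 → IntervalIntegrable f volume u v := fun u v hu huv hv =>
    hf.mono_set (uIcc_subset_uIcc (by simp [hu, huv.trans hv]) (by simp [hu.trans huv, hv]))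
  have hind : ∀ u v, IntervalIntegrable ((Ico u v).indicator f) volume 0 1 := fun u v => by
    rw [intervalIntegrable_iff] at hf ⊢
    exact hf.indicator measurableSet_Ico
  have hshift : IntervalIntegrable (fun x => f (x + h)) volume a (a + h) := by
    simpa using (hf' (a + h) (a + h + h) (by linarith) (by linarith) h1).comp_add_right h
  rw [integral_sub (hind _ _) (hind _ _),
    integral_indicator_Ico_of_le ha (by linarith) (by linarith),
    integral_indicator_Ico_of_le (by linarith) (by linarith) h1,
    integral_sub (hf' a (a + h) ha (by linarith) (by linarith)) hshift, integral_comp_add_right]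

theorem div_two_pow_add_le_one {j k : ℕ} (hk : k < 2 ^ j) :
    (k : ℝ) / 2 ^ j + 1 / 2 ^ (j + 1) + 1 / 2 ^ (j + 1) ≤ 1 := by
  have hk' : (k : ℝ) + 1 ≤ 2 ^ j := by exact_mod_cast hk
  rw [pow_succ]
  field_simp
  linarith

theorem mul_haarW_eq_indicator_sub_indicator (f : ℝ → ℝ) (j k : ℕ) (x : ℝ) :
    f x * haarW j k x =
      (Ico ((k : ℝ) / 2 ^ j) (k / 2 ^ j + 1 / 2 ^ (j + 1))).indicator f x
        - (Ico ((k : ℝ) / 2 ^ j + 1 / 2 ^ (j + 1))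
            (k / 2 ^ j + 1 / 2 ^ (j + 1) + 1 / 2 ^ (j + 1))).indicator f x := by
  have hmid : ((k : ℝ) + 1 / 2) / 2 ^ j = k / 2 ^ j + 1 / 2 ^ (j + 1) := by
    rw [pow_succ]; ring
  have hend : ((k : ℝ) + 1) / 2 ^ j = k / 2 ^ j + 1 / 2 ^ (j + 1) + 1 / 2 ^ (j + 1) := by
    rw [pow_succ]; ring
  unfold haarW
  rw [hmid, hend]
  simp only [indicator_apply, mem_Ico]
  split_ifs <;> grind

theorem integral_mul_haarW {f : ℝ → ℝ} (hf : IntervalIntegrable f volume 0 1) {j k : ℕ}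
    (hk : k < 2 ^ j) :
    ∫ x in (0:ℝ)..1, f x * haarW j k x
      = ∫ x in (k / 2 ^ j : ℝ)..k / 2 ^ j + 1 / 2 ^ (j + 1), (f x - f (x + 1 / 2 ^ (j + 1))) := by
  simp only [mul_haarW_eq_indicator_sub_indicator]
  exact integral_indicator_Ico_sub_indicator_Ico hf (by positivity) (by positivity)
    (div_two_pow_add_le_one hk)

theorem abs_le_on_Icc_prod_of_Ioo {g : ℝ × ℝ → ℝ} (hg : Continuous g) {M a b c d : ℝ}
    (hab : a ≠ b) (hcd : c ≠ d) (h : ∀ x ∈ Ioo a b, ∀ y ∈ Ioo c d, |g (x, y)| ≤ M) :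
    ∀ x ∈ Icc a b, ∀ y ∈ Icc c d, |g (x, y)| ≤ M := by
  intro x hx y hy
  refine le_on_closure (f := fun p => |g p|) (s := Ioo a b ×ˢ Ioo c d)
    (fun p hp => h p.1 hp.1 p.2 hp.2) hg.abs.continuousOn continuousOn_const ?_
  rw [closure_prod_eq, closure_Ioo hab, closure_Ioo hcd]
  exact ⟨hx, hy⟩

theorem abs_integral_integral_le {f : ℝ → ℝ → ℝ} {C a b c d : ℝ} (hab : a ≤ b) (hcd : c ≤ d)
    (h : ∀ x ∈ Icc a b, ∀ y ∈ Icc c d, |f x y| ≤ C) :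
    |∫ x in a..b, ∫ y in c..d, f x y| ≤ C * (d - c) * (b - a) := by
  have hinner : ∀ x ∈ Ι a b, ‖∫ y in c..d, f x y‖ ≤ C * (d - c) := by
    intro x hx
    rw [uIoc_of_le hab] at hx
    have hbound : ∀ y ∈ Ι c d, ‖f x y‖ ≤ C := fun y hy =>
      h x (Ioc_subset_Icc_self hx) y (Ioc_subset_Icc_self (uIoc_of_le hcd ▸ hy))
    simpa [abs_of_nonneg (sub_nonneg.2 hcd)] using norm_integral_le_of_norm_le_const hbound
  simpa [abs_of_nonneg (sub_nonneg.2 hab)] using norm_integral_le_of_norm_le_const hinner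

section
variable {E : Type*} [NormedAddCommGroup E] [NormedSpace ℝ E] {G : ℝ × ℝ → E} {x y : ℝ}

theorem DifferentiableAt.hasDerivAt_comp_prodMk_left (hG : DifferentiableAt ℝ G (x, y)) :
    HasDerivAt (fun y => G (x, y)) (fderiv ℝ G (x, y) (0, 1)) y :=
  hG.hasFDerivAt.comp_hasDerivAt y ((hasDerivAt_const y x).prodMk (hasDerivAt_id y))

theorem DifferentiableAt.hasDerivAt_comp_prodMk_right (hG : DifferentiableAt ℝ G (x, y)) :
    HasDerivAt (fun x => G (x, y)) (fderiv ℝ G (x, y) (1, 0)) x :=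
  hG.hasFDerivAt.comp_hasDerivAt x ((hasDerivAt_id x).prodMk (hasDerivAt_const x y))

end

section
variable {z : ℝ → ℝ → ℝ}

theorem deriv_curry_snd_eq (hz : Differentiable ℝ fun p : ℝ × ℝ => z p.1 p.2) (y : ℝ) :
    (fun x => deriv (fun y => z x y) y) =
      fun x => fderiv ℝ (fun p : ℝ × ℝ => z p.1 p.2) (x, y) (0, 1) :=
  funext fun _ => (hz _).hasDerivAt_comp_prodMk_left.deriv

theorem differentiableAt_curry_snd (hz : Differentiable ℝ fun p : ℝ × ℝ => z p.1 p.2) (x y : ℝ) :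
    DifferentiableAt ℝ (fun y => z x y) y :=
  (hz _).hasDerivAt_comp_prodMk_left.differentiableAt

theorem contDiff_fderiv_apply_snd (hz : ContDiff ℝ 2 fun p : ℝ × ℝ => z p.1 p.2) :
    ContDiff ℝ 1 fun p => fderiv ℝ (fun p : ℝ × ℝ => z p.1 p.2) p (0, 1) :=
  (hz.fderiv_right (by norm_num)).clm_apply contDiff_const

theorem differentiableAt_deriv_curry_snd (hz : ContDiff ℝ 2 fun p : ℝ × ℝ => z p.1 p.2) (x y : ℝ) :
    DifferentiableAt ℝ (fun x => deriv (fun y => z x y) y) x := by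
  rw [deriv_curry_snd_eq (hz.differentiable two_ne_zero)]
  exact ((contDiff_fderiv_apply_snd hz).differentiable one_ne_zero _).hasDerivAt_comp_prodMk_right
    |>.differentiableAt

theorem continuous_deriv_deriv_curry (hz : ContDiff ℝ 2 fun p : ℝ × ℝ => z p.1 p.2) :
    Continuous fun p : ℝ × ℝ => deriv (fun x => deriv (fun y => z x y) p.2) p.1 := by
  have hP := contDiff_fderiv_apply_snd hz
  have h : (fun p : ℝ × ℝ => deriv (fun x => deriv (fun y => z x y) p.2) p.1)
      = fun p => fderiv ℝ (fun p => fderiv ℝ (fun p : ℝ × ℝ => z p.1 p.2) p (0, 1)) p (1, 0) := by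
    ext ⟨x, y⟩
    rw [deriv_curry_snd_eq (hz.differentiable two_ne_zero)]
    exact (hP.differentiable one_ne_zero _).hasDerivAt_comp_prodMk_right.deriv
  rw [h]
  exact (hP.continuous_fderiv one_ne_zero).clm_apply continuous_const

theorem abs_sub_sub_sub_le_of_abs_deriv_deriv_le {M x₀ x₁ y₀ y₁ : ℝ} (hx : x₀ ≤ x₁) (hy : y₀ ≤ y₁)
    (hz₂ : ∀ x ∈ Icc x₀ x₁, ∀ y ∈ Icc y₀ y₁, DifferentiableAt ℝ (fun y => z x y) y)
    (hz₁₂ : ∀ x ∈ Icc x₀ x₁, ∀ y ∈ Icc y₀ y₁,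
      DifferentiableAt ℝ (fun x => deriv (fun y => z x y) y) x)
    (hM : ∀ x ∈ Icc x₀ x₁, ∀ y ∈ Icc y₀ y₁, |deriv (fun x => deriv (fun y => z x y) y) x| ≤ M) :
    |z x₀ y₀ - z x₀ y₁ - (z x₁ y₀ - z x₁ y₁)| ≤ M * (x₁ - x₀) * (y₁ - y₀) := by
  have hx₀ := left_mem_Icc.2 hx
  have hx₁ := right_mem_Icc.2 hx
  have hderiv : ∀ y ∈ Icc y₀ y₁, ‖deriv (fun y => z x₁ y - z x₀ y) y‖ ≤ M * (x₁ - x₀) := by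
    intro y hy
    rw [deriv_fun_sub (hz₂ x₁ hx₁ y hy) (hz₂ x₀ hx₀ y hy)]
    simpa [abs_of_nonneg (sub_nonneg.2 hx)] using
      (convex_Icc x₀ x₁).norm_image_sub_le_of_norm_deriv_le (fun x hx => hz₁₂ x hx y hy)
        (fun x hx => hM x hx y hy) hx₀ hx₁
  have := (convex_Icc y₀ y₁).norm_image_sub_le_of_norm_deriv_le
    (fun y hy => (hz₂ x₁ hx₁ y hy).fun_sub (hz₂ x₀ hx₀ y hy)) hderiv (left_mem_Icc.2 hy)
    (right_mem_Icc.2 hy)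
  rw [Real.norm_eq_abs, Real.norm_eq_abs, abs_of_nonneg (sub_nonneg.2 hy)] at this
  convert this using 2
  ring

end

theorem integral_integral_mul_haarW_mul_haarW {z : ℝ → ℝ → ℝ}
    (hz : Continuous fun p : ℝ × ℝ => z p.1 p.2) {j₁ k₁ j₂ k₂ : ℕ} (hk₁ : k₁ < 2 ^ j₁)
    (hk₂ : k₂ < 2 ^ j₂) :
    ∫ x in (0:ℝ)..1, ∫ y in (0:ℝ)..1, z x y * haarW j₁ k₁ x * haarW j₂ k₂ y =
      ∫ x in (k₁ / 2 ^ j₁ : ℝ)..k₁ / 2 ^ j₁ + 1 / 2 ^ (j₁ + 1),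
        ∫ y in (k₂ / 2 ^ j₂ : ℝ)..k₂ / 2 ^ j₂ + 1 / 2 ^ (j₂ + 1),
          (z x y - z x (y + 1 / 2 ^ (j₂ + 1))
            - (z (x + 1 / 2 ^ (j₁ + 1)) y - z (x + 1 / 2 ^ (j₁ + 1)) (y + 1 / 2 ^ (j₂ + 1)))) := by
  set h₂ : ℝ := 1 / 2 ^ (j₂ + 1)
  have hdiff : ∀ x, Continuous fun y => z x y - z x (y + h₂) := fun x =>
    (hz.comp (Continuous.prodMk_right x)).sub
      (hz.comp ((Continuous.prodMk_right x).comp (continuous_add_const h₂)))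
  have hinner : ∀ x, ∫ y in (0:ℝ)..1, z x y * haarW j₁ k₁ x * haarW j₂ k₂ y =
      (∫ y in (k₂ / 2 ^ j₂ : ℝ)..k₂ / 2 ^ j₂ + h₂, (z x y - z x (y + h₂))) * haarW j₁ k₁ x := by
    intro x
    have hf : IntervalIntegrable (fun y => z x y * haarW j₁ k₁ x) volume 0 1 :=
      ((hz.comp (Continuous.prodMk_right x)).mul continuous_const).intervalIntegrable 0 1
    rw [integral_mul_haarW hf hk₂, ← intervalIntegral.integral_mul_const]
    exact integral_congr fun y _ => by ring
  have hcont :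
      Continuous fun x => ∫ y in (k₂ / 2 ^ j₂ : ℝ)..k₂ / 2 ^ j₂ + h₂, (z x y - z x (y + h₂)) :=
    continuous_parametric_intervalIntegral_of_continuous' (hz.sub (hz.comp
      (continuous_fst.prodMk (continuous_snd.add continuous_const)))) _ _
  simp only [hinner]
  rw [integral_mul_haarW (hcont.intervalIntegrable 0 1) hk₁]
  exact integral_congr fun x _ =>
    (integral_sub ((hdiff x).intervalIntegrable _ _) ((hdiff _).intervalIntegrable _ _)).symm

theorem haar_coefficient_bound_two_indices
    (z : ℝ → ℝ → ℝ) (M : ℝ) (j₁ k₁ j₂ k₂ : ℕ)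
    (hk₁ : k₁ < 2 ^ j₁) (hk₂ : k₂ < 2 ^ j₂)
    (hz : ContDiff ℝ 2 (fun p : ℝ × ℝ => z p.1 p.2))
    (hM : ∀ x ∈ Set.Ioo (0:ℝ) 1, ∀ y ∈ Set.Ioo (0:ℝ) 1,
      |deriv (fun x => deriv (fun y => z x y) y) x| ≤ M) :
    |∫ x in (0:ℝ)..1, ∫ y in (0:ℝ)..1, z x y * haarW j₁ k₁ x * haarW j₂ k₂ y|
      ≤ M / (2 ^ (j₁ + 1) * 2 ^ (j₂ + 1)) := by
  rw [integral_integral_mul_haarW_mul_haarW hz.continuous hk₁ hk₂]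
  have hh : ∀ j : ℕ, 0 ≤ (1 : ℝ) / 2 ^ (j + 1) ∧ (1 : ℝ) / 2 ^ (j + 1) ≤ 1 := fun j =>
    ⟨by positivity, div_le_one_of_le₀ (one_le_pow₀ one_le_two) (by positivity)⟩
  have ha₁ : 0 ≤ (k₁ : ℝ) / 2 ^ j₁ := by positivity
  have ha₂ : 0 ≤ (k₂ : ℝ) / 2 ^ j₂ := by positivity
  have hle₁ := div_two_pow_add_le_one hk₁
  have hle₂ := div_two_pow_add_le_one hk₂
  have hh₁ := hh j₁
  have hh₂ := hh j₂
  set a₁ : ℝ := k₁ / 2 ^ j₁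
  set a₂ : ℝ := k₂ / 2 ^ j₂
  set h₁ : ℝ := 1 / 2 ^ (j₁ + 1) with h₁_def
  set h₂ : ℝ := 1 / 2 ^ (j₂ + 1) with h₂_def
  have hM' := abs_le_on_Icc_prod_of_Ioo (continuous_deriv_deriv_curry hz) zero_ne_one zero_ne_one hM
  have hM₀ : 0 ≤ M := (abs_nonneg _).trans (hM' 0 (by simp) 0 (by simp))
  have hΔ : ∀ x ∈ Icc a₁ (a₁ + h₁), ∀ y ∈ Icc a₂ (a₂ + h₂),
      |z x y - z x (y + h₂) - (z (x + h₁) y - z (x + h₁) (y + h₂))| ≤ M * h₁ * h₂ := by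
    intro x hx y hy
    simpa using abs_sub_sub_sub_le_of_abs_deriv_deriv_le (le_add_of_nonneg_right hh₁.1)
      (le_add_of_nonneg_right hh₂.1)
      (fun x _ y _ => differentiableAt_curry_snd (hz.differentiable two_ne_zero) x y)
      (fun x _ y _ => differentiableAt_deriv_curry_snd hz x y)
      (fun x' hx' y' hy' =>
        hM' x' (Icc_subset_Icc (by linarith [hx.1]) (by linarith [hx.2]) hx')
          y' (Icc_subset_Icc (by linarith [hy.1]) (by linarith [hy.2]) hy'))
  calc _ ≤ M * h₁ * h₂ * h₂ * h₁ := by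
        simpa using abs_integral_integral_le (le_add_of_nonneg_right hh₁.1)
          (le_add_of_nonneg_right hh₂.1) hΔ
    _ = M * h₁ * h₂ * (h₂ * h₁) := by ring
    _ ≤ M * h₁ * h₂ := mul_le_of_le_one_right (by positivity) (mul_le_one₀ hh₂.2 hh₁.1 hh₁.2)
    _ = M / (2 ^ (j₁ + 1) * 2 ^ (j₂ + 1)) := by rw [h₁_def, h₂_def]; field_simp
end

section
/- Let α ∈ (0,1), σ ∈ (0,1), and for k ≥ 1 define b_k = (1/(2−α))[(k+σ)^{2−α} − (k−1+σ)^{2−α}] − (1/2)[(k+σ)^{1−α} + (k−1+σ)^{1−α}]. Then b_k > 0 for all k ≥ 1. -/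
open intervalIntegral Set

private lemma chord_lemma {a p : ℝ} (ha : 0 < a) (hp0 : 0 < p) (hp1 : p < 1) :
    (a ^ p + (a + 1) ^ p) / 2 < ((a + 1) ^ (p + 1) - a ^ (p + 1)) / (p + 1) := by
  set b : ℝ := a + 1 with hb
  have hab : a < b := by simp [hb]
  have hbpos : 0 < b := by linarith
  set c₁ : ℝ := b ^ p - a ^ p with hc₁
  set c₀ : ℝ := a ^ p - a * c₁ with hc₀
  have hconc := Real.strictConcaveOn_rpow hp0 hp1
  -- chord integral
  have hI1 : (∫ x in a..b, (c₀ + c₁ * x)) = (a ^ p + b ^ p) / 2 := by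
    rw [intervalIntegral.integral_add (intervalIntegrable_const)
        ((intervalIntegral.intervalIntegrable_id).const_mul c₁),
      intervalIntegral.integral_const, intervalIntegral.integral_const_mul,
      integral_id]
    have : b - a = 1 := by simp [hb]
    rw [this]
    simp only [smul_eq_mul, hc₀, hc₁, hb]
    ring
  have hI2 : (∫ x in a..b, x ^ p) = (b ^ (p + 1) - a ^ (p + 1)) / (p + 1) := by
    rw [integral_rpow (Or.inl (by linarith))]
  -- pointwise inequality
  have hle : ∀ x ∈ Ioc a b, c₀ + c₁ * x ≤ x ^ p := by
    intro x hx
    rcases eq_or_lt_of_le hx.2 with h | hxb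
    · rw [h]
      have : c₀ + c₁ * b = b ^ p := by rw [hc₀, hc₁]; ring
      exact this.le
    · have hxa := hx.1
      have ht : (b - x) + (x - a) = 1 := by rw [hb]; ring
      have := hconc.2 (x := a) (y := b) (le_of_lt ha) (le_of_lt hbpos)
        (ne_of_lt hab) (by linarith : (0:ℝ) < b - x) (by linarith : (0:ℝ) < x - a) ht
      have hx' : (b - x) • a + (x - a) • b = x := by
        simp only [smul_eq_mul, hb]; ring
      rw [hx'] at this
      simp only [smul_eq_mul] at this
      have : (b - x) * a ^ p + (x - a) * b ^ p < x ^ p := this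
      have he : c₀ + c₁ * x = (b - x) * a ^ p + (x - a) * b ^ p := by
        rw [hc₀, hc₁, hb]; ring
      linarith
  have hcont1 : ContinuousOn (fun x : ℝ => c₀ + c₁ * x) (Icc a b) := by
    fun_prop
  have hcont2 : ContinuousOn (fun x : ℝ => x ^ p) (Icc a b) := by
    apply ContinuousOn.rpow_const continuousOn_id
    intro x _
    exact Or.inr hp0.le
  have hltpt : ∃ c ∈ Icc a b, c₀ + c₁ * c < c ^ p := by
    refine ⟨(a + b) / 2, ⟨by linarith, by linarith⟩, ?_⟩
    have hmem : (a + b) / 2 ∈ Ioc a b := ⟨by linarith, by linarith⟩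
    have h1 := hle _ hmem
    rcases lt_or_eq_of_le h1 with h | h
    · exact h
    · -- show strict: midpoint is in Ioo, strict concavity gives strict
      exfalso
      have ht : (b - (a+b)/2) + ((a+b)/2 - a) = 1 := by rw [hb]; ring
      have := hconc.2 (x := a) (y := b) (le_of_lt ha) (le_of_lt hbpos)
        (ne_of_lt hab) (by linarith : (0:ℝ) < b - (a+b)/2)
        (by linarith : (0:ℝ) < (a+b)/2 - a) ht
      have hx' : (b - (a+b)/2) • a + ((a+b)/2 - a) • b = (a+b)/2 := by
        simp only [smul_eq_mul]; ring
      rw [hx'] at this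
      simp only [smul_eq_mul] at this
      have he : c₀ + c₁ * ((a+b)/2) = (b - (a+b)/2) * a ^ p + ((a+b)/2 - a) * b ^ p := by
        rw [hc₀, hc₁, hb]; ring
      linarith
  have := intervalIntegral.integral_lt_integral_of_continuousOn_of_le_of_exists_lt
    hab hcont1 hcont2 hle hltpt
  rw [hI1, hI2] at this
  exact this

theorem L2_1sigma_weights_b_positive
    (α σ : ℝ) (hα : α ∈ Set.Ioo (0:ℝ) 1) (hσ : σ ∈ Set.Ioo (0:ℝ) 1) :
    ∀ k : ℕ, 1 ≤ k →
      0 < (1 / (2 - α)) * (((k : ℝ) + σ) ^ (2 - α) - ((k : ℝ) - 1 + σ) ^ (2 - α))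
          - (1 / 2) * (((k : ℝ) + σ) ^ (1 - α) + ((k : ℝ) - 1 + σ) ^ (1 - α)) := by
  intro k hk
  obtain ⟨hα0, hα1⟩ := hα
  obtain ⟨hσ0, hσ1⟩ := hσ
  set a : ℝ := (k : ℝ) - 1 + σ with ha_def
  have hk1 : (1 : ℝ) ≤ (k : ℝ) := by exact_mod_cast hk
  have ha : 0 < a := by simp [ha_def]; linarith
  have hb : (k : ℝ) + σ = a + 1 := by rw [ha_def]; ring
  set p : ℝ := 1 - α with hp_def
  have hp0 : 0 < p := by simp [hp_def]; linarith
  have hp1 : p < 1 := by simp [hp_def]; linarith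
  have hpp : p + 1 = 2 - α := by rw [hp_def]; ring
  have key := chord_lemma ha hp0 hp1
  rw [hpp] at key
  rw [hb]
  have h2α : (0:ℝ) < 2 - α := by linarith
  rw [div_lt_div_iff₀ (by norm_num : (0:ℝ) < 2) h2α] at key
  have heq : 1 / (2 - α) * ((a + 1) ^ (2 - α) - a ^ (2 - α)) - 1 / 2 * ((a + 1) ^ p + a ^ p)
      = (((a + 1) ^ (2 - α) - a ^ (2 - α)) * 2 - (a ^ p + (a + 1) ^ p) * (2 - α))
        / (2 * (2 - α)) := by
    field_simp
    ring
  rw [heq]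
  apply div_pos (by linarith) (by linarith)
end
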